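/- Let T be a left-invertible bounded operator on a Hilbert space with left-inverse L. If 0 ∈ σ(T), then for every nonzero complex λ with λ ∉ σ_l(L), the point 1/λ belongs to σ_r(T) \ σ_l(T); moreover 0 itself belongs to σ_r(T) \ σ_l(T) and 0 ∈ σ_l(L) \ σ_r(L). -/

import Mathlib

open ContinuousLinearMap

/-- The left spectrum of `T`. -/
def leftSpectrum {H : Type*} [NormedAddCommGroup H] [InnerProductSpace ℂ H] [CompleteSpace H]
    (T : H →L[ℂ] H) : Set ℂ :=
  {z | ¬ ∃ L : H →L[ℂ] H, L * (T - z • 1) = 1}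

/-- The right spectrum of `T`. -/
def rightSpectrum {H : Type*} [NormedAddCommGroup H] [InnerProductSpace ℂ H] [CompleteSpace H]
    (T : H →L[ℂ] H) : Set ℂ :=
  {z | ¬ ∃ R : H →L[ℂ] H, (T - z • 1) * R = 1}

/-!
Everything is ring theory in `B(H)`. For `LT = 1` and `z ≠ 0` one has
`L (T - z⁻¹) = -z⁻¹ (L - z)` and `(L - z) T = -z (T - z⁻¹)`. The first turns a left inverse of
`L - z` into one of `T - z⁻¹`. By the second, if `T - z⁻¹` were invertible then `(L - z) T`
would be too, and a factor `T` of a unit `(L - z) T` whose left factor is left-invertible is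
itself a unit, contradicting `0 ∈ σ(T)`. At `0`: a right inverse of `T`, or a left inverse of `L`,
would make `T` two-sided invertible.
-/

section Monoid

variable {M : Type*} [Monoid M] {a b c : M}

theorem isUnit_of_mul_eq_one_of_isUnit_mul (hab : a * b = 1) (hbc : IsUnit (b * c)) :
    IsUnit c := by
  obtain ⟨u, hu⟩ := hbc
  have hc : c = a * u := by rw [hu, ← mul_assoc, hab, one_mul]
  refine isUnit_iff_exists.2 ⟨↑u⁻¹ * b, ?_, ?_⟩
  · rw [hc, mul_assoc, ← mul_assoc (u : M), Units.mul_inv, one_mul, hab]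
  · rw [mul_assoc, ← hu, Units.inv_mul]

theorem not_exists_mul_eq_one_right_of_mul_eq_one (hab : a * b = 1) (hb : ¬IsUnit b) :
    ¬∃ c, b * c = 1 :=
  fun hc => hb (isUnit_iff_exists_and_exists.2 ⟨hc, a, hab⟩)

theorem not_exists_mul_eq_one_left_of_mul_eq_one (hab : a * b = 1) (hb : ¬IsUnit b) :
    ¬∃ c, c * a = 1 := by
  rintro ⟨c, hca⟩
  have hcb : c = b := left_inv_eq_right_inv hca hab
  exact hb (isUnit_iff_exists.2 ⟨a, hcb ▸ hca, hab⟩)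

end Monoid

section Algebra

variable {𝕜 A : Type*} [Field 𝕜] [Ring A] [Algebra 𝕜 A] {l t : A} {z : 𝕜}

theorem mul_sub_inv_smul_one_of_mul_eq_one (hlt : l * t = 1) (hz : z ≠ 0) :
    l * (t - z⁻¹ • 1) = (-z⁻¹) • (l - z • 1) := by
  rw [mul_sub, hlt, mul_smul_comm, mul_one, smul_sub, smul_smul, neg_mul, inv_mul_cancel₀ hz]
  module

theorem sub_smul_one_mul_of_mul_eq_one (hlt : l * t = 1) (hz : z ≠ 0) :
    (l - z • 1) * t = (-z) • (t - z⁻¹ • 1) := by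
  rw [sub_mul, hlt, smul_mul_assoc, one_mul, smul_sub, smul_smul, neg_mul, mul_inv_cancel₀ hz]
  module

theorem mul_sub_inv_smul_one_eq_one_of_mul_sub_smul_one_eq_one (hlt : l * t = 1) (hz : z ≠ 0)
    {a : A} (ha : a * (l - z • 1) = 1) : ((-z) • (a * l)) * (t - z⁻¹ • 1) = 1 := by
  rw [smul_mul_assoc, mul_assoc, mul_sub_inv_smul_one_of_mul_eq_one hlt hz, mul_smul_comm, ha,
    smul_smul, mul_neg, neg_mul, neg_neg, mul_inv_cancel₀ hz, one_smul]

theorem not_exists_sub_inv_smul_one_mul_eq_one (hlt : l * t = 1) (ht : ¬IsUnit t) (hz : z ≠ 0)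
    {a : A} (ha : a * (l - z • 1) = 1) : ¬∃ r, (t - z⁻¹ • 1) * r = 1 := by
  intro hr
  have hunit : IsUnit (t - z⁻¹ • 1) := isUnit_iff_exists_and_exists.2
    ⟨hr, _, mul_sub_inv_smul_one_eq_one_of_mul_sub_smul_one_eq_one hlt hz ha⟩
  refine ht (isUnit_of_mul_eq_one_of_isUnit_mul ha ?_)
  rw [sub_smul_one_mul_of_mul_eq_one hlt hz]
  exact hunit.smul (Units.mk0 (-z) (neg_ne_zero.2 hz))

end Algebra

/-- Spectral dichotomy: if `LT = I` and `0 ∈ σ(T)`, then for every nonzero `λ ∉ σ_l(L)`,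
`1/λ ∈ σ_r(T) \ σ_l(T)`; moreover `0 ∈ σ_r(T) \ σ_l(T)` and `0 ∈ σ_l(L) \ σ_r(L)`. -/
theorem stmt_10 {H : Type*} [NormedAddCommGroup H] [InnerProductSpace ℂ H] [CompleteSpace H]
    (T L : H →L[ℂ] H) (hL : L * T = 1) (h0 : (0 : ℂ) ∈ spectrum ℂ T) :
    (∀ z : ℂ, z ≠ 0 → z ∉ leftSpectrum L →
      z⁻¹ ∈ rightSpectrum T ∧ z⁻¹ ∉ leftSpectrum T) ∧
    ((0 : ℂ) ∈ rightSpectrum T ∧ (0 : ℂ) ∉ leftSpectrum T) ∧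
    ((0 : ℂ) ∈ leftSpectrum L ∧ (0 : ℂ) ∉ rightSpectrum L) := by
  have hT : ¬IsUnit T := (spectrum.zero_mem_iff ℂ).1 h0
  refine ⟨fun z hz hzL => ?_, ⟨?_, ?_⟩, ?_, ?_⟩
  · obtain ⟨A, hA⟩ := not_not.1 hzL
    exact ⟨not_exists_sub_inv_smul_one_mul_eq_one hL hT hz hA,
      not_not.2 ⟨_, mul_sub_inv_smul_one_eq_one_of_mul_sub_smul_one_eq_one hL hz hA⟩⟩
  · simpa [rightSpectrum] using not_exists_mul_eq_one_right_of_mul_eq_one hL hT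
  · simpa [leftSpectrum] using ⟨L, hL⟩
  · simpa [leftSpectrum] using not_exists_mul_eq_one_left_of_mul_eq_one hL hT
  · simpa [rightSpectrum] using ⟨T, hL⟩
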